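/- Let p ≥ 1, ρ > 0, let S ∈ ℝ^{p×p} be symmetric positive semidefinite and let Θ ∈ ℝ^{p×p} be symmetric positive definite. Then log det Θ − tr(SΘ) − ρ ∑_{j,k=1}^p |Θ_{jk}| ≤ p · log λ₁(Θ) − (ρ/p) · λ₁(Θ). -/

import Mathlib

/-!
Every eigenvalue of `Θ` lies in `(0, λ₁(Θ)]`, so `log det Θ = ∑ᵢ log λᵢ ≤ p log λ₁(Θ)`.
Writing `Θ = CᴴC`, `tr(SΘ) = tr(C S Cᴴ) ≥ 0`. Finally the penalty dominates `ρ/p · λ₁(Θ)`,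
since `λ₁(Θ) ≤ tr Θ ≤ ∑_{j,k} |Θ_{jk}|` for positive semidefinite `Θ`.
-/

open Matrix

/-- The largest eigenvalue of a real matrix (as the supremum of its set of eigenvalues). -/
noncomputable def maxEig {p : ℕ} (A : Matrix (Fin p) (Fin p) ℝ) : ℝ :=
  sSup {μ : ℝ | ∃ v : Fin p → ℝ, v ≠ 0 ∧ A.mulVec v = μ • v}

/-- The GLASSO objective `Q_S(Θ) = log det Θ − tr(SΘ) − ρ ∑_{j,k} |Θ_{jk}|`. -/
noncomputable def glassoObj {p : ℕ} (ρ : ℝ) (S Θ : Matrix (Fin p) (Fin p) ℝ) : ℝ :=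
  Real.log Θ.det - (S * Θ).trace - ρ * ∑ j, ∑ k, |Θ j k|

namespace Matrix

variable {n : Type*} [Fintype n]

theorem trace_le_sum_sum_abs (A : Matrix n n ℝ) : A.trace ≤ ∑ j, ∑ k, |A j k| :=
  Finset.sum_le_sum fun j _ =>
    (le_abs_self _).trans <|
      Finset.single_le_sum (f := fun k => |A j k|) (fun _ _ => abs_nonneg _) (Finset.mem_univ j)

open scoped ComplexOrder MatrixOrder in
theorem PosSemidef.trace_mul_nonneg {𝕜 : Type*} [RCLike 𝕜] {A B : Matrix n n 𝕜}
    (hA : A.PosSemidef) (hB : B.PosSemidef) : 0 ≤ (A * B).trace := by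
  classical
  obtain ⟨C, rfl⟩ := CStarAlgebra.nonneg_iff_eq_star_mul_self.mp hB.nonneg
  rw [star_eq_conjTranspose, ← mul_assoc, trace_mul_comm]
  simpa only [mul_assoc] using (hA.mul_mul_conjTranspose_same C).trace_nonneg

variable [DecidableEq n]

theorem IsHermitian.setOf_mulVec_eq_smul_eq_range_eigenvalues {A : Matrix n n ℝ}
    (hA : A.IsHermitian) :
    {μ : ℝ | ∃ v : n → ℝ, v ≠ 0 ∧ A *ᵥ v = μ • v} = Set.range hA.eigenvalues := by
  ext μ
  constructor
  · rintro ⟨v, hv, hAv⟩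
    rw [← hA.spectrum_real_eq_range_eigenvalues, ← spectrum_toLin',
      ← Module.End.hasEigenvalue_iff_mem_spectrum]
    exact Module.End.hasEigenvalue_of_hasEigenvector
      (Module.End.hasEigenvector_iff.2 ⟨Module.End.mem_eigenspace_iff.2 hAv, hv⟩)
  · rintro ⟨i, rfl⟩
    exact ⟨_, (WithLp.ofLp_eq_zero 2).ne.2 (hA.eigenvectorBasis.orthonormal.ne_zero i),
      hA.mulVec_eigenvectorBasis i⟩

end Matrix

section maxEig

variable {p : ℕ} {A : Matrix (Fin p) (Fin p) ℝ}

theorem Matrix.IsHermitian.maxEig_eq_sSup_range_eigenvalues (hA : A.IsHermitian) :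
    maxEig A = sSup (Set.range hA.eigenvalues) := by
  rw [maxEig, hA.setOf_mulVec_eq_smul_eq_range_eigenvalues]

theorem Matrix.IsHermitian.eigenvalues_le_maxEig (hA : A.IsHermitian) (i : Fin p) :
    hA.eigenvalues i ≤ maxEig A := by
  rw [hA.maxEig_eq_sSup_range_eigenvalues]
  exact le_csSup (Set.finite_range _).bddAbove ⟨i, rfl⟩

theorem Matrix.PosSemidef.maxEig_nonneg (hA : A.PosSemidef) : 0 ≤ maxEig A := by
  rw [hA.1.maxEig_eq_sSup_range_eigenvalues]
  exact Real.sSup_nonneg <| Set.forall_mem_range.2 hA.eigenvalues_nonneg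

theorem Matrix.PosSemidef.maxEig_le_trace (hA : A.PosSemidef) : maxEig A ≤ A.trace := by
  have htrace : A.trace = ∑ i, hA.1.eigenvalues i := by
    simpa using hA.1.trace_eq_sum_eigenvalues
  rw [hA.1.maxEig_eq_sSup_range_eigenvalues]
  refine Real.sSup_le ?_ hA.trace_nonneg
  rintro _ ⟨i, rfl⟩
  exact htrace ▸ Finset.single_le_sum (fun j _ => hA.eigenvalues_nonneg j) (Finset.mem_univ i)

theorem Matrix.PosDef.log_det_le_card_mul_log_maxEig (hA : A.PosDef) :
    Real.log A.det ≤ p * Real.log (maxEig A) := by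
  rw [hA.1.det_eq_prod_eigenvalues, ← RCLike.ofReal_prod, RCLike.ofReal_real_eq_id, id,
    Real.log_prod fun i _ => (hA.eigenvalues_pos i).ne']
  calc ∑ i, Real.log (hA.1.eigenvalues i) ≤ ∑ _i : Fin p, Real.log (maxEig A) :=
        Finset.sum_le_sum fun i _ =>
          Real.log_le_log (hA.eigenvalues_pos i) (hA.1.eigenvalues_le_maxEig i)
    _ = p * Real.log (maxEig A) := by simp

end maxEig

theorem glasso_objective_upper_bound_general
    (p : ℕ) (ρ : ℝ) (hρ : 0 < ρ)
    (S : Matrix (Fin p) (Fin p) ℝ) (hS : S.PosSemidef)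
    (Θ : Matrix (Fin p) (Fin p) ℝ) (hΘ : Θ.PosDef) :
    glassoObj ρ S Θ ≤ p * Real.log (maxEig Θ) - ρ / p * maxEig Θ := by
  have hlogdet := hΘ.log_det_le_card_mul_log_maxEig
  have htrace := hS.trace_mul_nonneg hΘ.posSemidef
  have hpenalty : ρ / p * maxEig Θ ≤ ρ * ∑ j, ∑ k, |Θ j k| :=
    calc ρ / p * maxEig Θ ≤ ρ * maxEig Θ :=
          mul_le_mul_of_nonneg_right (div_nat_le_self_of_nonnneg hρ.le p)
            hΘ.posSemidef.maxEig_nonneg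
      _ ≤ ρ * ∑ j, ∑ k, |Θ j k| :=
          mul_le_mul_of_nonneg_left
            (hΘ.posSemidef.maxEig_le_trace.trans (trace_le_sum_sum_abs Θ)) hρ.le
  rw [glassoObj]
  linarith

theorem glasso_objective_upper_bound
    (p : ℕ) (hp : 1 ≤ p) (ρ : ℝ) (hρ : 0 < ρ)
    (S : Matrix (Fin p) (Fin p) ℝ) (hS : S.PosSemidef)
    (Θ : Matrix (Fin p) (Fin p) ℝ) (hΘ : Θ.PosDef) :
    glassoObj ρ S Θ ≤ p * Real.log (maxEig Θ) - ρ / p * maxEig Θ :=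
  glasso_objective_upper_bound_general p ρ hρ S hS Θ hΘ
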